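/- arXiv:2007.12953 — 2 statements merged into one kernel-verified Lean document; each statement's English description precedes it below -/
import Mathlib

section
/- Let F : ℝ² → ℝ be a strictly convex gauge, i.e. F is convex, positively 1-homogeneous, positive on nonzero vectors, and satisfies F(v + w) < F(v) + F(w) whenever v, w are nonzero and do not lie on a common ray (¬ SameRay ℝ v w). Let μ be a nonzero finite Borel measure on a measurable space X and let ν : X → ℝ² be measurable with ‖ν(x)‖ = 1 for μ-almost every x. Then F(∫ ν dμ) = ∫ F(ν(x)) dμ(x) if and only if ν is μ-almost everywhere equal to a constant unit vector. -/
open MeasureTheory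

/-! Convexity and homogeneity make `F` sublinear, so by Hahn–Banach some linear `g ≤ F` touches
`F` at the mean `m = ∫ ν dμ`. If Jensen is an equality, the nonnegative function `F ∘ ν - g ∘ ν`
has integral `F m - g m = 0`, so `ν` lies a.e. in the contact set `{F = g}`. Two distinct unit
vectors `v, w` in it are not on a common ray, and strict convexity gives the contradiction
`F (v + w) < g v + g w = g (v + w) ≤ F (v + w)`. -/

section Sublinear

variable {E : Type*} [AddCommGroup E] [Module ℝ E] {F : E → ℝ}

theorem ConvexOn.map_add_le_of_homogeneous (hconv : ConvexOn ℝ Set.univ F)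
    (hhom : ∀ c : ℝ, 0 ≤ c → ∀ v, F (c • v) = c * F v) (v w : E) :
    F (v + w) ≤ F v + F w := by
  have hmid := hconv.2 (Set.mem_univ v) (Set.mem_univ w) (by norm_num : (0 : ℝ) ≤ 1 / 2)
    (by norm_num : (0 : ℝ) ≤ 1 / 2) (by norm_num)
  rw [← smul_add, hhom _ (by norm_num)] at hmid
  simp only [smul_eq_mul] at hmid
  linarith

theorem exists_linearMap_le_of_sublinear
    (hhom : ∀ c : ℝ, 0 ≤ c → ∀ v, F (c • v) = c * F v) (hsub : ∀ v w, F (v + w) ≤ F v + F w)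
    (x : E) : ∃ g : E →ₗ[ℝ] ℝ, g x = F x ∧ ∀ v, g v ≤ F v := by
  have hF0 : F 0 = 0 := by simpa using hhom 0 le_rfl 0
  have hker : ∀ c : ℝ, c • x = 0 → c • F x = 0 := by
    intro c hc
    rcases smul_eq_zero.mp hc with rfl | rfl
    · exact zero_smul ℝ _
    · rw [hF0, smul_zero]
  let f : E →ₗ.[ℝ] ℝ := LinearPMap.mkSpanSingleton' x (F x) hker
  obtain ⟨g, hgf, hgF⟩ := exists_extension_of_le_sublinear f F (fun c hc => hhom c hc.le) hsub <| by
    rintro ⟨y, hy⟩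
    obtain ⟨c, rfl⟩ := Submodule.mem_span_singleton.mp hy
    rw [LinearPMap.mkSpanSingleton'_apply, smul_eq_mul, RingHom.id_apply]
    rcases le_or_gt 0 c with hc | hc
    · exact (hhom c hc x).ge
    · -- `0 = F 0 ≤ F (c • x) + F (-c • x)` and the last term is `-c * F x`
      have := hsub (c • x) ((-c) • x)
      rw [← add_smul, add_neg_cancel, zero_smul, hF0, hhom (-c) (by linarith)] at this
      linarith
  refine ⟨g, ?_, hgF⟩
  rw [hgf ⟨x, Submodule.mem_span_singleton_self x⟩]
  exact LinearPMap.mkSpanSingleton'_apply_self x (F x) hker _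

end Sublinear

theorem Continuous.integrable_comp_of_norm_le {X E : Type*} [MeasurableSpace X] {μ : Measure X}
    [IsFiniteMeasure μ] [NormedAddCommGroup E] [ProperSpace E] {F : E → ℝ} (hF : Continuous F)
    {ν : X → E} (hν : AEStronglyMeasurable ν μ) {R : ℝ} (hR : ∀ᵐ x ∂μ, ‖ν x‖ ≤ R) :
    Integrable (fun x => F (ν x)) μ := by
  obtain ⟨C, hC⟩ :=
    (isCompact_closedBall (0 : E) R).exists_bound_of_continuousOn hF.continuousOn
  refine .of_bound (hF.comp_aestronglyMeasurable hν) C (hR.mono fun x hx => hC _ ?_)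
  rwa [mem_closedBall_zero_iff]

theorem ae_eq_of_integral_comp_eq {X E : Type*} [MeasurableSpace X] {μ : Measure X}
    [NormedAddCommGroup E] [NormedSpace ℝ E] [CompleteSpace E] {F : E → ℝ} {g : E →L[ℝ] ℝ}
    (hle : ∀ v, g v ≤ F v) {ν : X → E} (hν : Integrable ν μ)
    (hFν : Integrable (fun x => F (ν x)) μ) (hg : g (∫ x, ν x ∂μ) = F (∫ x, ν x ∂μ))
    (heq : F (∫ x, ν x ∂μ) = ∫ x, F (ν x) ∂μ) :
    ∀ᵐ x ∂μ, F (ν x) = g (ν x) := by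
  have hgap : ∫ x, (F (ν x) - g (ν x)) ∂μ = 0 := by
    rw [integral_sub hFν (g.integrable_comp hν), g.integral_comp_comm hν, hg, heq, sub_self]
  have hgap_ae := (integral_eq_zero_iff_of_nonneg (fun x => sub_nonneg.mpr (hle (ν x)))
    (hFν.sub (g.integrable_comp hν))).mp hgap
  filter_upwards [hgap_ae] with x hx
  exact sub_eq_zero.mp hx

theorem eq_of_norm_eq_one_of_apply_eq {E : Type*} [NormedAddCommGroup E] [NormedSpace ℝ E]
    {F : E → ℝ} (hstrict : ∀ v w : E, v ≠ 0 → w ≠ 0 → ¬ SameRay ℝ v w → F (v + w) < F v + F w)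
    {g : E →ₗ[ℝ] ℝ} (hle : ∀ v, g v ≤ F v) {v w : E} (hv : ‖v‖ = 1) (hw : ‖w‖ = 1)
    (hFv : F v = g v) (hFw : F w = g w) : v = w := by
  by_contra hne
  have hv0 : v ≠ 0 := norm_ne_zero_iff.mp (by rw [hv]; exact one_ne_zero)
  have hw0 : w ≠ 0 := norm_ne_zero_iff.mp (by rw [hw]; exact one_ne_zero)
  have hlt := hstrict v w hv0 hw0 ((not_sameRay_iff_of_norm_eq (hv.trans hw.symm)).mpr hne)
  rw [hFv, hFw, ← map_add] at hlt
  exact (hle (v + w)).not_gt hlt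

theorem stmt_3_general
    {X : Type*} [MeasurableSpace X] (μ : Measure X) [IsFiniteMeasure μ]
    (hμ : μ ≠ 0)
    (F : EuclideanSpace ℝ (Fin 2) → ℝ)
    (hconv : ConvexOn ℝ Set.univ F)
    (hhom : ∀ c : ℝ, 0 ≤ c → ∀ v, F (c • v) = c * F v)
    (hstrict : ∀ v w : EuclideanSpace ℝ (Fin 2), v ≠ 0 → w ≠ 0 →
      ¬ SameRay ℝ v w → F (v + w) < F v + F w)
    (ν : X → EuclideanSpace ℝ (Fin 2))
    (hmeas : Measurable ν)
    (hunit : ∀ᵐ x ∂μ, ‖ν x‖ = 1) :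
    F (∫ x, ν x ∂μ) = ∫ x, F (ν x) ∂μ ↔
      ∃ w : EuclideanSpace ℝ (Fin 2), ‖w‖ = 1 ∧ ∀ᵐ x ∂μ, ν x = w := by
  have hbound : ∀ᵐ x ∂μ, ‖ν x‖ ≤ 1 := hunit.mono fun _ h => h.le
  have hνint : Integrable ν μ := .of_bound hmeas.aestronglyMeasurable 1 hbound
  have hFcont : Continuous F := continuousOn_univ.mp (hconv.continuousOn isOpen_univ)
  have hFνint := hFcont.integrable_comp_of_norm_le hmeas.aestronglyMeasurable hbound
  constructor
  · intro heq
    obtain ⟨g, hgm, hle⟩ := exists_linearMap_le_of_sublinear hhom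
      (hconv.map_add_le_of_homogeneous hhom) (∫ x, ν x ∂μ)
    have hcontact := ae_eq_of_integral_comp_eq (g := LinearMap.toContinuousLinearMap g) hle
      hνint hFνint hgm heq
    have : (ae μ).NeBot := ae_neBot.mpr hμ
    obtain ⟨x₀, hx₀, hx₀F⟩ := (hunit.and hcontact).exists
    refine ⟨ν x₀, hx₀, ?_⟩
    filter_upwards [hunit, hcontact] with x hx hxF
    exact eq_of_norm_eq_one_of_apply_eq hstrict hle hx hx₀ hxF hx₀F
  · rintro ⟨w, -, hw⟩
    rw [integral_congr_ae hw, integral_congr_ae (hw.mono fun x hx => congrArg F hx),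
      integral_const, integral_const, smul_eq_mul, hhom _ measureReal_nonneg]

theorem stmt_3
    {X : Type*} [MeasurableSpace X] (μ : Measure X) [IsFiniteMeasure μ]
    (hμ : μ ≠ 0)
    (F : EuclideanSpace ℝ (Fin 2) → ℝ)
    (hconv : ConvexOn ℝ Set.univ F)
    (hhom : ∀ c : ℝ, 0 ≤ c → ∀ v, F (c • v) = c * F v)
    (hpos : ∀ v : EuclideanSpace ℝ (Fin 2), v ≠ 0 → 0 < F v)
    (hstrict : ∀ v w : EuclideanSpace ℝ (Fin 2), v ≠ 0 → w ≠ 0 →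
      ¬ SameRay ℝ v w → F (v + w) < F v + F w)
    (ν : X → EuclideanSpace ℝ (Fin 2))
    (hmeas : Measurable ν)
    (hunit : ∀ᵐ x ∂μ, ‖ν x‖ = 1) :
    F (∫ x, ν x ∂μ) = ∫ x, F (ν x) ∂μ ↔
      ∃ w : EuclideanSpace ℝ (Fin 2), ‖w‖ = 1 ∧ ∀ᵐ x ∂μ, ν x = w :=
  stmt_3_general μ hμ F hconv hhom hstrict ν hmeas hunit
end

section
/- Let F : ℝ² → ℝ be a strictly convex gauge, i.e. F is convex, positively 1-homogeneous, positive on nonzero vectors, and satisfies F(v + w) < F(v) + F(w) whenever v, w are nonzero and do not lie on a common ray (¬ SameRay ℝ v w). Let γ : [0,1] → ℝ² be continuously differentiable with γ(0) ≠ γ(1), and suppose ∫₀¹ F(γ'(t)) dt = F(γ(1) − γ(0)). Then for every t ∈ [0,1] the velocity γ'(t) is a nonnegative scalar multiple of γ(1) − γ(0), and the image of γ is contained in the closed segment [γ(0), γ(1)]. -/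
/-!
Write `V = γ 1 - γ 0`. Since `F` is sublinear, Hahn–Banach gives a linear `ℓ ≤ F` with
`ℓ V = F V`. Then `∫ ℓ (γ') = ℓ V = F V = ∫ F (γ')`, and as `F (γ') - ℓ (γ')` is continuous and
nonnegative, `ℓ (γ' t) = F (γ' t)` for every `t`. Now `F (V + γ' t) ≥ ℓ (V + γ' t) = F V + F (γ' t)`,
so strict convexity puts `γ' t` on the ray of `V`. A curve whose velocity is always a nonnegative
multiple of `V` moves monotonically along the line through `γ 0` in direction `V`, hence stays in
the segment between its endpoints.
-/

open intervalIntegral Set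

section Sublinear

variable {E : Type*} [AddCommGroup E] [Module ℝ E] {F : E → ℝ}

lemma ConvexOn.map_add_le_of_pos_homogeneous (hconv : ConvexOn ℝ univ F)
    (hhom : ∀ c : ℝ, 0 < c → ∀ x, F (c • x) = c * F x) (x y : E) :
    F (x + y) ≤ F x + F y := by
  have hmid := hconv.2 (mem_univ x) (mem_univ y) (by norm_num : (0:ℝ) ≤ 1 / 2)
    (by norm_num : (0:ℝ) ≤ 1 / 2) (by norm_num)
  have hxy : x + y = (2:ℝ) • ((1 / 2 : ℝ) • x + (1 / 2 : ℝ) • y) := by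
    rw [smul_add, smul_smul, smul_smul]; norm_num
  rw [hxy, hhom 2 two_pos]
  simp only [smul_eq_mul] at hmid
  linarith

lemma mul_le_map_smul_of_sublinear (hhom : ∀ c : ℝ, 0 < c → ∀ x, F (c • x) = c * F x)
    (hadd : ∀ x y, F (x + y) ≤ F x + F y) (a : ℝ) (v : E) : a * F v ≤ F (a • v) := by
  have hF0 : F 0 = 0 := by
    have h := hhom 2 two_pos 0
    rw [smul_zero] at h
    linarith
  rcases lt_trichotomy a 0 with ha | rfl | ha
  · have h := hadd (a • v) ((-a) • v)
    rw [← add_smul, add_neg_cancel, zero_smul, hF0, hhom (-a) (neg_pos.2 ha)] at h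
    linarith
  · simp [hF0]
  · exact (hhom a ha v).ge

lemma exists_linearMap_le_eq_of_sublinear (hhom : ∀ c : ℝ, 0 < c → ∀ x, F (c • x) = c * F x)
    (hadd : ∀ x y, F (x + y) ≤ F x + F y) {v : E} (hv : v ≠ 0) :
    ∃ ℓ : E →ₗ[ℝ] ℝ, (∀ x, ℓ x ≤ F x) ∧ ℓ v = F v := by
  obtain ⟨ℓ, hℓext, hℓle⟩ := exists_extension_of_le_sublinear
    (LinearPMap.mkSpanSingleton v (F v) hv) F hhom hadd (by
      rintro ⟨x, hx⟩
      obtain ⟨a, rfl⟩ := Submodule.mem_span_singleton.mp hx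
      rw [LinearPMap.mkSpanSingleton'_apply, RingHom.id_apply, smul_eq_mul]
      exact mul_le_map_smul_of_sublinear hhom hadd a v)
  exact ⟨ℓ, hℓle, (hℓext _).trans (LinearPMap.mkSpanSingleton_apply ℝ ℝ hv (F v))⟩

lemma sameRay_of_supporting_linearMap
    (hstrict : ∀ v w : E, v ≠ 0 → w ≠ 0 → ¬ SameRay ℝ v w → F (v + w) < F v + F w)
    {ℓ : E →ₗ[ℝ] ℝ} (hℓ : ∀ x, ℓ x ≤ F x) {v w : E} (hv : ℓ v = F v) (hw : ℓ w = F w) :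
    SameRay ℝ v w := by
  by_contra hray
  have hlt := hstrict v w (fun h => hray (h ▸ SameRay.zero_left w))
    (fun h => hray (h ▸ SameRay.zero_right v)) hray
  have hle := hℓ (v + w)
  rw [map_add, hv, hw] at hle
  linarith

end Sublinear

lemma eqOn_of_le_of_integral_eq {f g : ℝ → ℝ} {a b : ℝ} (hab : a < b)
    (hf : ContinuousOn f (Icc a b)) (hg : ContinuousOn g (Icc a b))
    (hle : ∀ x ∈ Icc a b, f x ≤ g x) (hint : ∫ x in a..b, f x = ∫ x in a..b, g x) :
    EqOn f g (Icc a b) := by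
  intro t ht
  by_contra hne
  refine (integral_lt_integral_of_continuousOn_of_le_of_exists_lt hab hf hg
    (fun x hx => hle x (Ioc_subset_Icc_self hx)) ⟨t, ht, ?_⟩).ne hint
  exact (hle t ht).lt_of_ne hne

section Ray

variable {E : Type*} [NormedAddCommGroup E] [NormedSpace ℝ E] {γ γ' : ℝ → E} {a b : ℝ} {v : E}
  {ℓ : StrongDual ℝ E}

lemma sub_eq_smul_of_hasDerivWithinAt_eq_smul (hℓv : ℓ v = 1)
    (hγ : ∀ t ∈ Icc a b, HasDerivWithinAt γ (γ' t) (Icc a b) t)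
    (hray : ∀ t ∈ Icc a b, ∃ c : ℝ, γ' t = c • v) :
    ∀ t ∈ Icc a b, γ t - γ a = (ℓ (γ t) - ℓ (γ a)) • v := by
  have hγc : ContinuousOn γ (Icc a b) := fun t ht => (hγ t ht).continuousWithinAt
  have hconst := constant_of_has_deriv_right_zero (f := fun s => γ s - ℓ (γ s) • v)
    (hγc.sub ((ℓ.continuous.comp_continuousOn hγc).smul continuousOn_const))
    (fun t ht => by
      have ht' : t ∈ Icc a b := Ico_subset_Icc_self ht
      obtain ⟨c, hc⟩ := hray t ht'
      have hderiv := (hγ t ht').sub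
        ((ℓ.hasFDerivAt.comp_hasDerivWithinAt t (hγ t ht')).smul_const v)
      rw [hc, map_smul, hℓv, smul_eq_mul, mul_one, sub_self] at hderiv
      exact hderiv.mono_of_mem_nhdsWithin (Icc_mem_nhdsGE_of_mem ht))
  intro t ht
  have h := hconst t ht
  rw [sub_smul]
  linear_combination (norm := module) h

lemma monotoneOn_comp_of_hasDerivWithinAt_eq_smul (hℓv : ℓ v = 1)
    (hγ : ∀ t ∈ Icc a b, HasDerivWithinAt γ (γ' t) (Icc a b) t)
    (hray : ∀ t ∈ Icc a b, ∃ c : ℝ, 0 ≤ c ∧ γ' t = c • v) :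
    MonotoneOn (fun t => ℓ (γ t)) (Icc a b) := by
  refine monotoneOn_of_hasDerivWithinAt_nonneg (convex_Icc a b)
    (ℓ.continuous.comp_continuousOn fun t ht => (hγ t ht).continuousWithinAt)
    (f' := fun t => ℓ (γ' t)) (fun t ht => ?_) (fun t ht => ?_) <;>
    simp only [interior_Icc] at ht ⊢
  · exact (ℓ.hasFDerivAt.comp_hasDerivWithinAt t (hγ t (Ioo_subset_Icc_self ht))).mono
      Ioo_subset_Icc_self
  · obtain ⟨c, hc, hγ't⟩ := hray t (Ioo_subset_Icc_self ht)
    simpa [hγ't, hℓv] using hc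

lemma image_subset_segment_of_hasDerivWithinAt_eq_smul (hv : v ≠ 0)
    (hγ : ∀ t ∈ Icc a b, HasDerivWithinAt γ (γ' t) (Icc a b) t)
    (hray : ∀ t ∈ Icc a b, ∃ c : ℝ, 0 ≤ c ∧ γ' t = c • v) :
    γ '' Icc a b ⊆ segment ℝ (γ a) (γ b) := by
  obtain ⟨ℓ, hℓv⟩ := SeparatingDual.exists_eq_one (R := ℝ) hv
  have hline := sub_eq_smul_of_hasDerivWithinAt_eq_smul hℓv hγ
    fun t ht => (hray t ht).imp fun _ => And.right
  have hmono := monotoneOn_comp_of_hasDerivWithinAt_eq_smul hℓv hγ hray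
  rintro _ ⟨t, ht, rfl⟩
  have ha : a ∈ Icc a b := ⟨le_rfl, ht.1.trans ht.2⟩
  have hb : b ∈ Icc a b := ⟨ht.1.trans ht.2, le_rfl⟩
  rw [mem_segment_iff_sameRay, ← sub_sub_sub_cancel_right (γ b) (γ t) (γ a), hline t ht,
    hline b hb, ← sub_smul, sub_sub_sub_cancel_right]
  exact ((SameRay.refl v).nonneg_smul_left (sub_nonneg.2 (hmono ha ht ht.1))).nonneg_smul_right
    (sub_nonneg.2 (hmono ht hb ht.2))

end Ray

theorem stmt_6_general
    (F : EuclideanSpace ℝ (Fin 2) → ℝ)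
    (hconv : ConvexOn ℝ Set.univ F)
    (hhom : ∀ c : ℝ, 0 ≤ c → ∀ v, F (c • v) = c * F v)
    (hstrict : ∀ v w : EuclideanSpace ℝ (Fin 2), v ≠ 0 → w ≠ 0 →
      ¬ SameRay ℝ v w → F (v + w) < F v + F w)
    (γ : ℝ → EuclideanSpace ℝ (Fin 2))
    (hγ : ContDiffOn ℝ 1 γ (Set.Icc 0 1))
    (hne : γ 0 ≠ γ 1)
    (heq : ∫ t in (0:ℝ)..1, F (derivWithin γ (Set.Icc 0 1) t) = F (γ 1 - γ 0)) :
    (∀ t ∈ Set.Icc (0:ℝ) 1, ∃ c : ℝ, 0 ≤ c ∧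
        derivWithin γ (Set.Icc 0 1) t = c • (γ 1 - γ 0)) ∧
      γ '' Set.Icc (0:ℝ) 1 ⊆ segment ℝ (γ 0) (γ 1) := by
  set γ' := derivWithin γ (Icc 0 1)
  set V := γ 1 - γ 0
  have hV : V ≠ 0 := sub_ne_zero.mpr hne.symm
  have hhom_pos : ∀ c : ℝ, 0 < c → ∀ v, F (c • v) = c * F v := fun c hc => hhom c hc.le
  obtain ⟨ℓ, hℓF, hℓV⟩ := exists_linearMap_le_eq_of_sublinear hhom_pos
    (hconv.map_add_le_of_pos_homogeneous hhom_pos) hV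
  set L : StrongDual ℝ (EuclideanSpace ℝ (Fin 2)) := LinearMap.toContinuousLinearMap ℓ
  have hγ'c : ContinuousOn γ' (Icc 0 1) :=
    hγ.continuousOn_derivWithin (uniqueDiffOn_Icc one_pos) le_rfl
  have hLγ' : ∫ t in (0:ℝ)..1, L (γ' t) = F V := by
    rw [L.intervalIntegral_comp_comm (hγ'c.intervalIntegrable_of_Icc zero_le_one),
      integral_derivWithin_Icc_of_contDiffOn_Icc hγ zero_le_one]
    exact hℓV
  have hFγ' : EqOn (fun t => L (γ' t)) (fun t => F (γ' t)) (Icc 0 1) :=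
    eqOn_of_le_of_integral_eq one_pos (L.continuous.comp_continuousOn hγ'c)
      ((hconv.continuousOn isOpen_univ).comp hγ'c (mapsTo_univ _ _)) (fun t _ => hℓF (γ' t))
      (hLγ'.trans heq.symm)
  have hray : ∀ t ∈ Icc (0:ℝ) 1, ∃ c : ℝ, 0 ≤ c ∧ γ' t = c • V := fun t ht =>
    have ⟨c, hc, hcV⟩ :=
      (sameRay_of_supporting_linearMap hstrict hℓF hℓV (hFγ' ht)).exists_nonneg_left hV
    ⟨c, hc, hcV.symm⟩
  exact ⟨hray, image_subset_segment_of_hasDerivWithinAt_eq_smul hV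
    (fun t ht => (hγ.differentiableOn one_ne_zero t ht).hasDerivWithinAt) hray⟩

theorem stmt_6
    (F : EuclideanSpace ℝ (Fin 2) → ℝ)
    (hconv : ConvexOn ℝ Set.univ F)
    (hhom : ∀ c : ℝ, 0 ≤ c → ∀ v, F (c • v) = c * F v)
    (hpos : ∀ v : EuclideanSpace ℝ (Fin 2), v ≠ 0 → 0 < F v)
    (hstrict : ∀ v w : EuclideanSpace ℝ (Fin 2), v ≠ 0 → w ≠ 0 →
      ¬ SameRay ℝ v w → F (v + w) < F v + F w)
    (γ : ℝ → EuclideanSpace ℝ (Fin 2))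
    (hγ : ContDiffOn ℝ 1 γ (Set.Icc 0 1))
    (hne : γ 0 ≠ γ 1)
    (heq : ∫ t in (0:ℝ)..1, F (derivWithin γ (Set.Icc 0 1) t) = F (γ 1 - γ 0)) :
    (∀ t ∈ Set.Icc (0:ℝ) 1, ∃ c : ℝ, 0 ≤ c ∧
        derivWithin γ (Set.Icc 0 1) t = c • (γ 1 - γ 0)) ∧
      γ '' Set.Icc (0:ℝ) 1 ⊆ segment ℝ (γ 0) (γ 1) :=
  stmt_6_general F hconv hhom hstrict γ hγ hne heq
end
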